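/- For all p ∈ [0,1] and all z ∈ [−1,1], letting r_b = √((1−p)(1−z²) + (1−p)² z²), the Holevo quantity of the symmetric (n = 1/2) generalized amplitude damping channel evaluated on the ensemble {[α_+], [α_−]} with equal weights is at most the binary-symmetric-channel capacity: h((1 − (1−p)|z|)/2) − h((1 − r_b)/2) ≤ 1 − h((1 − √(1−p))/2). -/
import Mathlib


/-- The binary entropy function in base 2 (with the convention `h(0) = h(1) = 0`,
using `Real.logb 2 0 = 0`). -/
noncomputable def binH (x : ℝ) : ℝ := -(x * Real.logb 2 x) - (1 - x) * Real.logb 2 (1 - x)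

lemma binH_eq (x : ℝ) : binH x = Real.binEntropy x / Real.log 2 := by
  simp [binH, Real.binEntropy, Real.logb, Real.log_inv]
  ring

lemma binH_le_one (x : ℝ) : binH x ≤ 1 := by
  rw [binH_eq, div_le_one (Real.log_pos one_lt_two)]
  exact Real.binEntropy_le_log_two

lemma binH_mono {a b : ℝ} (ha : 0 ≤ a) (hab : a ≤ b) (hb : b ≤ 1/2) :
    binH a ≤ binH b := by
  rw [binH_eq, binH_eq]
  have := Real.binEntropy_strictMonoOn.monotoneOn
    (Set.mem_Icc.mpr ⟨ha, by linarith⟩)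
    (Set.mem_Icc.mpr ⟨le_trans ha hab, by linarith⟩) hab
  gcongr

/-- The Holevo quantity of the symmetric (`n = 1/2`) GADC on the equal-weight ensemble
`{[α_+], [α_−]}` is bounded above by the binary-symmetric-channel capacity:
`h((1 − (1−p)|z|)/2) − h((1 − r_b)/2) ≤ 1 − h((1 − √(1−p))/2)`, where
`r_b = √((1−p)(1−z²) + (1−p)²z²)`. -/
theorem holevo_le_bsc_capacity (p z : ℝ) (hp : p ∈ Set.Icc (0 : ℝ) 1)
    (hz : z ∈ Set.Icc (-1 : ℝ) 1) :
    binH ((1 - (1 - p) * |z|) / 2) -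
        binH ((1 - Real.sqrt ((1 - p) * (1 - z ^ 2) + (1 - p) ^ 2 * z ^ 2)) / 2) ≤
      1 - binH ((1 - Real.sqrt (1 - p)) / 2) := by
  obtain ⟨hp0, hp1⟩ := hp
  obtain ⟨hz0, hz1⟩ := hz
  set q : ℝ := 1 - p with hq
  have hq0 : 0 ≤ q := by linarith
  have hq1 : q ≤ 1 := by linarith
  have hzsq : z ^ 2 ≤ 1 := by nlinarith
  set r : ℝ := Real.sqrt (q * (1 - z ^ 2) + q ^ 2 * z ^ 2) with hr
  have hr0 : 0 ≤ r := Real.sqrt_nonneg _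
  have hrq : r ≤ Real.sqrt q := by
    apply Real.sqrt_le_sqrt
    have h := mul_nonneg (mul_nonneg hq0 (by linarith : (0:ℝ) ≤ 1 - q)) (sq_nonneg z)
    nlinarith
  have hsq1 : Real.sqrt q ≤ 1 := by
    rw [show (1:ℝ) = Real.sqrt 1 by simp]
    exact Real.sqrt_le_sqrt hq1
  have h1 : binH ((1 - q * |z|) / 2) ≤ 1 := binH_le_one _
  have h2 : binH ((1 - Real.sqrt q) / 2) ≤ binH ((1 - r) / 2) := by
    apply binH_mono
    · linarith
    · linarith
    · linarith
  linarith
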